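/- For positive integers l1 ≤ m1 < l2 ≤ m2, n > 1, and k ≥ 1, the number of k-element subsets X of [l1,m1] ∪ [l2,m2] with gcd(X ∪ {n}) = 1 equals the sum over divisors d of n of μ(d)·C(⌊m1/d⌋ + ⌊m2/d⌋ − ⌊(l1−1)/d⌋ − ⌊(l2−1)/d⌋, k). -/

import Mathlib

/-!
Möbius inversion over the divisors of `n` turns the coprimality condition into an alternating
sum of the conditions `d ∣ gcd X`, and a `k`-subset of `A` has all its elements divisible by `d`
exactly when it is a `k`-subset of the multiples of `d` in `A`. For `A = [l₁, m₁] ∪ [l₂, m₂]`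
there are `⌊m₁/d⌋ - ⌊(l₁-1)/d⌋ + ⌊m₂/d⌋ - ⌊(l₂-1)/d⌋` such multiples.
-/

open Finset ArithmeticFunction
open scoped ArithmeticFunction.Moebius

theorem Nat.sum_divisors_moebius (g : ℕ) :
    ∑ d ∈ g.divisors, (μ d : ℤ) = if g = 1 then 1 else 0 := by
  simpa only [coe_mul_zeta_apply, one_apply] using congrArg (· g) moebius_mul_coe_zeta

theorem Nat.sum_divisors_filter_dvd_moebius {n : ℕ} (hn : n ≠ 0) (g : ℕ) :
    ∑ d ∈ n.divisors with d ∣ g, (μ d : ℤ) = if Nat.gcd g n = 1 then 1 else 0 := by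
  have h : {d ∈ n.divisors | d ∣ g} = (Nat.gcd g n).divisors := by
    ext d
    simp only [mem_filter, Nat.mem_divisors, Nat.dvd_gcd_iff]
    constructor
    · rintro ⟨⟨hdn, -⟩, hdg⟩; exact ⟨⟨hdg, hdn⟩, Nat.gcd_ne_zero_right hn⟩
    · rintro ⟨⟨hdg, hdn⟩, -⟩; exact ⟨⟨hdn, hn⟩, hdg⟩
  rw [h, Nat.sum_divisors_moebius]

theorem Finset.powersetCard_filter_dvd_gcd (A : Finset ℕ) (k d : ℕ) :
    {X ∈ A.powersetCard k | d ∣ X.gcd id} = {x ∈ A | d ∣ x}.powersetCard k := by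
  ext X
  simp only [mem_filter, mem_powersetCard, subset_iff, Finset.dvd_gcd_iff, id]
  grind

theorem Finset.card_powersetCard_filter_gcd_eq_one {n : ℕ} (hn : n ≠ 0) (A : Finset ℕ) (k : ℕ) :
    (#{X ∈ A.powersetCard k | Nat.gcd (X.gcd id) n = 1} : ℤ) =
      ∑ d ∈ n.divisors, μ d * ((#{x ∈ A | d ∣ x}).choose k : ℤ) := by
  calc (#{X ∈ A.powersetCard k | Nat.gcd (X.gcd id) n = 1} : ℤ)
      = ∑ X ∈ A.powersetCard k, ∑ d ∈ n.divisors with d ∣ X.gcd id, (μ d : ℤ) := by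
        simp only [Nat.sum_divisors_filter_dvd_moebius hn, sum_boole]
    _ = ∑ d ∈ n.divisors, ∑ X ∈ A.powersetCard k with d ∣ X.gcd id, (μ d : ℤ) := by
        simp only [sum_filter]; exact sum_comm
    _ = ∑ d ∈ n.divisors, μ d * ((#{x ∈ A | d ∣ x}).choose k : ℤ) := by
        refine sum_congr rfl fun d _ => ?_
        rw [sum_const, powersetCard_filter_dvd_gcd, card_powersetCard, nsmul_eq_mul, mul_comm]

theorem Nat.card_Ioc_filter_dvd (a b d : ℕ) : #{x ∈ Ioc a b | d ∣ x} = b / d - a / d := by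
  rcases le_total a b with hab | hba
  · have hsplit : {x ∈ Ioc 0 b | d ∣ x} = {x ∈ Ioc 0 a | d ∣ x} ∪ {x ∈ Ioc a b | d ∣ x} := by
      rw [← filter_union, Ioc_union_Ioc_eq_Ioc (Nat.zero_le a) hab]
    have hdisj : Disjoint {x ∈ Ioc 0 a | d ∣ x} {x ∈ Ioc a b | d ∣ x} :=
      disjoint_filter_filter (Ioc_disjoint_Ioc_of_le le_rfl)
    have hcard := congrArg card hsplit
    rw [card_union_of_disjoint hdisj, Ioc_filter_dvd_card_eq_div,
      Ioc_filter_dvd_card_eq_div] at hcard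
    omega
  · rw [Ioc_eq_empty_of_le hba, filter_empty, card_empty,
      Nat.sub_eq_zero_of_le (Nat.div_le_div_right hba)]

theorem Nat.card_Icc_filter_dvd {l : ℕ} (hl : 0 < l) (m d : ℕ) :
    #{x ∈ Icc l m | d ∣ x} = m / d - (l - 1) / d := by
  rw [← card_Ioc_filter_dvd, ← Icc_add_one_left_eq_Ioc, Nat.sub_one_add_one hl.ne']

theorem Nat.card_Icc_union_Icc_filter_dvd {l1 m1 l2 m2 : ℕ} (hl1 : 0 < l1) (h12 : m1 < l2)
    (d : ℕ) :
    #{x ∈ Icc l1 m1 ∪ Icc l2 m2 | d ∣ x} = m1 / d - (l1 - 1) / d + (m2 / d - (l2 - 1) / d) := by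
  have hdisj : Disjoint (Icc l1 m1) (Icc l2 m2) := disjoint_left.mpr fun x hx hx' => by
    simp only [mem_Icc] at hx hx'; omega
  rw [filter_union, card_union_of_disjoint (disjoint_filter_filter hdisj),
    card_Icc_filter_dvd hl1, card_Icc_filter_dvd (Nat.zero_lt_of_lt h12)]

theorem stmt14_general (l1 m1 l2 m2 n k : ℕ) (hl1 : 0 < l1) (h1 : l1 ≤ m1) (h12 : m1 < l2)
    (h2 : l2 ≤ m2) (hn : 1 < n) :
    (((((Finset.Icc l1 m1) ∪ (Finset.Icc l2 m2)).powerset.filter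
        (fun X => X.card = k ∧ Nat.gcd (X.gcd id) n = 1)).card : ℤ)) =
      ∑ d ∈ n.divisors, (ArithmeticFunction.moebius d) *
        (Nat.choose (m1 / d + m2 / d - (l1 - 1) / d - (l2 - 1) / d) k : ℤ) := by
  rw [← filter_filter, ← powersetCard_eq_filter,
    card_powersetCard_filter_gcd_eq_one (by omega)]
  refine sum_congr rfl fun d _ => ?_
  have hle1 : (l1 - 1) / d ≤ m1 / d := Nat.div_le_div_right (by omega)
  have hle2 : (l2 - 1) / d ≤ m2 / d := Nat.div_le_div_right (by omega)
  rw [Nat.card_Icc_union_Icc_filter_dvd hl1 h12]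
  congr 3
  omega

theorem stmt14 (l1 m1 l2 m2 n k : ℕ) (hl1 : 0 < l1) (h1 : l1 ≤ m1) (h12 : m1 < l2)
    (h2 : l2 ≤ m2) (hn : 1 < n) (hk : 1 ≤ k) :
    (((((Finset.Icc l1 m1) ∪ (Finset.Icc l2 m2)).powerset.filter
        (fun X => X.card = k ∧ Nat.gcd (X.gcd id) n = 1)).card : ℤ)) =
      ∑ d ∈ n.divisors, (ArithmeticFunction.moebius d) *
        (Nat.choose (m1 / d + m2 / d - (l1 - 1) / d - (l2 - 1) / d) k : ℤ) :=
  stmt14_general l1 m1 l2 m2 n k hl1 h1 h12 h2 hn
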